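/- Let t ∈ PT_n be a planar tree and ω a weight of length n. If 𝒩 ≺ 𝒩' is a covering relation of the poset of maximal nestings (MN(t),<), then the edge vector from M(t,𝒩,ω) to M(t,𝒩',ω) has the form (0,…,0, x, 0,…,0, −x, 0,…,0) with x > 0, where x occurs in position j and −x in position j' with j < j', j and j' being the unique edges such that min𝒩(j) is the nest of 𝒩 \ 𝒩' and min𝒩'(j') is the nest of 𝒩' \ 𝒩. Consequently, any vector v ∈ ℝ^{n−1} with strictly decreasing coordinates satisfies ⟨M(t,𝒩',ω) − M(t,𝒩,ω), v⟩ > 0 for every covering relation, i.e. v induces the poset of maximal nestings (MN(t),<) on the set of vertices of P_{(t,ω)}. -/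

import Mathlib

open scoped BigOperators

noncomputable section

/-- Vectors in `ℝⁿ`. -/
abbrev Vec (n : ℕ) := Fin n → ℝ

/-- The standard scalar product on `ℝⁿ`. -/
def dot {n : ℕ} (x y : Vec n) : ℝ := ∑ i, x i * y i

/-- A polytope is the convex hull of a finite set of points. -/
def IsPolytope {n : ℕ} (P : Set (Vec n)) : Prop :=
  ∃ S : Finset (Vec n), P = convexHull ℝ (S : Set (Vec n))

/-- A face of `P`: either `P` itself (take `c = 0`) or the subset of `P` where some linear
functional attains its maximum over `P`. -/
def IsFace {n : ℕ} (P F : Set (Vec n)) : Prop :=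
  ∃ c : Vec n, F = {x ∈ P | ∀ y ∈ P, dot c y ≤ dot c x}

/-- Dimension of a subset of `ℝⁿ`: the rank of the direction of its affine span. -/
noncomputable def sdim {n : ℕ} (A : Set (Vec n)) : ℕ :=
  Module.finrank ℝ (affineSpan ℝ A).direction

/-- The normal cone of a face `F` of `P`. -/
def normalCone {n : ℕ} (P F : Set (Vec n)) : Set (Vec n) :=
  {c | F ⊆ {x ∈ P | ∀ y ∈ P, dot c y ≤ dot c x}}

/-- `coneOf X`: nonnegative linear combinations of finitely many elements of `X`. -/
def coneOf {n : ℕ} (X : Set (Vec n)) : Set (Vec n) :=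
  {v | ∃ (k : ℕ) (x : Fin k → Vec n) (l : Fin k → ℝ),
      (∀ i, x i ∈ X) ∧ (∀ i, 0 ≤ l i) ∧ v = ∑ i, l i • x i}

/-- The reflection `ρ_z P = 2z - P` of `P` with respect to `z`. -/
def reflP {n : ℕ} (z : Vec n) (P : Set (Vec n)) : Set (Vec n) :=
  (fun x => (2 : ℝ) • z - x) '' P

/-- An edge is a 1-dimensional face. -/
def IsEdge {n : ℕ} (P E : Set (Vec n)) : Prop := IsFace P E ∧ sdim E = 1

/-- `(P, v)` is oriented if `v` is not perpendicular to any edge of `P`. -/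
def Oriented {n : ℕ} (P : Set (Vec n)) (v : Vec n) : Prop :=
  ∀ E, IsEdge P E → ∀ d ∈ (affineSpan ℝ E).direction, d ≠ 0 → dot d v ≠ 0

/-- `(P, v)` is positively oriented if `(P ∩ ρ_z P, v)` is oriented for every `z ∈ P`. -/
def PosOriented {n : ℕ} (P : Set (Vec n)) (v : Vec n) : Prop :=
  ∀ z ∈ P, Oriented (P ∩ reflP z P) v

/-- `x` is the minimizer of `⟨-, v⟩` on `P`. -/
def IsBotOf {n : ℕ} (P : Set (Vec n)) (v x : Vec n) : Prop :=
  x ∈ P ∧ ∀ y ∈ P, dot v x ≤ dot v y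

/-- `x` is the maximizer of `⟨-, v⟩` on `P`. -/
def IsTopOf {n : ℕ} (P : Set (Vec n)) (v x : Vec n) : Prop :=
  x ∈ P ∧ ∀ y ∈ P, dot v y ≤ dot v x

/-- `(P, v)` is quasi-oriented if `⟨-, v⟩` has a unique minimizer and a unique maximizer on `P`. -/
def QuasiOriented {n : ℕ} (P : Set (Vec n)) (v : Vec n) : Prop :=
  (∃! x, IsBotOf P v x) ∧ (∃! x, IsTopOf P v x)

/-- `(P, v)` is quasi-positively oriented if `(P ∩ ρ_z P, v)` is quasi-oriented for all `z ∈ P`. -/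
def QuasiPosOriented {n : ℕ} (P : Set (Vec n)) (v : Vec n) : Prop :=
  ∀ z ∈ P, QuasiOriented (P ∩ reflP z P) v

/-- The polytope `P^φ = π^φ(P × P) ⊆ ℝ^{n+1}`, where `π^φ(x,y) = ((x+y)/2, ⟨x - y, v⟩)`. -/
def Pphi {n : ℕ} (P : Set (Vec n)) (v : Vec n) : Set (Vec (n + 1)) :=
  {w | ∃ x ∈ P, ∃ y ∈ P, w = Fin.snoc ((1 / 2 : ℝ) • (x + y)) (dot (x - y) v)}

/-- The pair of faces `(F, G)` belongs to `F^φ`: there are no `x ∈ F`, `y ∈ G`, `λ > 0` with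
`(π(x,y), φ(x,y) - λ) ∈ P^φ`. -/
def InFphi {n : ℕ} (P : Set (Vec n)) (v : Vec n) (F G : Set (Vec n)) : Prop :=
  ¬ ∃ x ∈ F, ∃ y ∈ G, ∃ lam : ℝ, 0 < lam ∧
      (Fin.snoc ((1 / 2 : ℝ) • (x + y)) (dot (x - y) v - lam) : Vec (n + 1)) ∈ Pphi P v

/-- The set `(A + B)/2`. -/
def avgSet {n : ℕ} (A B : Set (Vec n)) : Set (Vec n) :=
  {z | ∃ x ∈ A, ∃ y ∈ B, z = (1 / 2 : ℝ) • (x + y)}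

/-- The coherent subdivision `π(F^φ)` is tight. -/
def TightSub {n : ℕ} (P : Set (Vec n)) (v : Vec n) : Prop :=
  ∀ F G : Set (Vec n), IsFace P F → IsFace P G → F.Nonempty → G.Nonempty →
    InFphi P v F G → sdim F + sdim G = sdim (avgSet F G)

/-- `d` is a direction of an edge of `P ∩ ρ_z P` for some `z ∈ P`; the hyperplanes of the
fundamental hyperplane arrangement `H_P` are the orthogonal complements of such directions. -/
def EdgeDir {n : ℕ} (P : Set (Vec n)) (d : Vec n) : Prop :=
  d ≠ 0 ∧ ∃ z ∈ P, ∃ E, IsEdge (P ∩ reflP z P) E ∧ d ∈ (affineSpan ℝ E).direction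

/-- The cone `cone(-N_P(F) ∪ N_P(G))`. -/
def diagCone {n : ℕ} (P F G : Set (Vec n)) : Set (Vec n) :=
  coneOf ((Neg.neg '' normalCone P F) ∪ normalCone P G)

/-- A planar rooted tree with `n` internal vertices labelled `0, …, n-1` in the clockwise-from-root
(depth-first preorder) order; `parent v` is the parent of the vertex `v`, the root being vertex `0`.
The internal edge `e : Fin (n-1)` connects the vertex `e+1` to its parent. -/
structure PTree (n : ℕ) where
  parent : Fin n → Fin n
  parent_zero : ∀ v : Fin n, v.val = 0 → parent v = v
  parent_lt : ∀ v : Fin n, 0 < v.val → (parent v).val < v.val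
  preorder : ∀ v w : Fin n, w.val = v.val + 1 → ∃ k : ℕ, parent^[k] v = parent w

/-- The child endpoint of the edge `e`: the vertex labelled `e + 1`. -/
def childV {n : ℕ} (e : Fin (n - 1)) : Fin n :=
  ⟨e.val + 1, by have h := e.isLt; omega⟩

/-- The vertices of the closure of a set of edges `N`, i.e. `V(t(N))`. -/
def nestVtx {n : ℕ} (t : PTree n) (N : Finset (Fin (n - 1))) : Finset (Fin n) :=
  N.biUnion fun e => {childV e, t.parent (childV e)}

/-- Two distinct edges are adjacent when they share a vertex. -/
def edgeAdj {n : ℕ} (t : PTree n) (e f : Fin (n - 1)) : Prop :=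
  e ≠ f ∧ (({childV e, t.parent (childV e)} ∩ {childV f, t.parent (childV f)} :
      Finset (Fin n))).Nonempty

instance {n : ℕ} (t : PTree n) (e f : Fin (n - 1)) : Decidable (edgeAdj t e f) := by
  unfold edgeAdj; infer_instance

/-- A nest: a set of edges whose closure is a connected subgraph (the trivial nest `E(t)` is
also allowed when `n = 1`, where it is empty). -/
def IsNest {n : ℕ} (t : PTree n) (N : Finset (Fin (n - 1))) : Prop :=
  (N.Nonempty ∨ N = Finset.univ) ∧
    ∀ e ∈ N, ∀ f ∈ N,
      Relation.ReflTransGen (fun a b => a ∈ N ∧ b ∈ N ∧ edgeAdj t a b) e f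

/-- A nesting: a set of nests containing the trivial nest, any two of which are nested or
disjoint, disjoint ones having no adjacent edges. -/
def IsNesting {n : ℕ} (t : PTree n) (𝒩 : Finset (Finset (Fin (n - 1)))) : Prop :=
  (∀ N ∈ 𝒩, IsNest t N) ∧ Finset.univ ∈ 𝒩 ∧
    ∀ N ∈ 𝒩, ∀ M ∈ 𝒩,
      N ⊆ M ∨ M ⊆ N ∨ (Disjoint N M ∧ ∀ e ∈ N, ∀ f ∈ M, ¬ edgeAdj t e f)

/-- A maximal nesting: a nesting of (maximal) cardinality `n - 1`. -/
def IsMaxNesting {n : ℕ} (t : PTree n) (𝒩 : Finset (Finset (Fin (n - 1)))) : Prop :=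
  IsNesting t 𝒩 ∧ 𝒩.card = n - 1

/-- `min 𝒩(i)`: the smallest nest of `𝒩` containing the edge `i` (the nests of a nesting
containing `i` being totally ordered, this is their intersection). -/
def minNest {n : ℕ} (𝒩 : Finset (Finset (Fin (n - 1)))) (i : Fin (n - 1)) :
    Finset (Fin (n - 1)) :=
  (𝒩.filter fun N => i ∈ N).inf id

/-- `u` is a weak ancestor of `w` (any ancestor is reached in at most `n` steps). -/
def isAnc {n : ℕ} (t : PTree n) (u w : Fin n) : Prop :=
  ∃ k ∈ Finset.range (n + 1), t.parent^[k] w = u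

instance {n : ℕ} (t : PTree n) (u w : Fin n) : Decidable (isAnc t u w) := by
  unfold isAnc; infer_instance

/-- `α_i`: the total weight of the subtree `t₁` of `t(min𝒩(i))` having the edge `i` as root. -/
def alphaN {n : ℕ} (t : PTree n) (𝒩 : Finset (Finset (Fin (n - 1))))
    (ω : Fin n → ℤ) (i : Fin (n - 1)) : ℤ :=
  ∑ w ∈ (nestVtx t (minNest 𝒩 i)).filter (fun w => isAnc t (childV i) w), ω w

/-- `β_i`: the total weight of the subtree `t₂` of `t(min𝒩(i))` having the edge `i` as a leaf. -/
def betaN {n : ℕ} (t : PTree n) (𝒩 : Finset (Finset (Fin (n - 1))))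
    (ω : Fin n → ℤ) (i : Fin (n - 1)) : ℤ :=
  ∑ w ∈ (nestVtx t (minNest 𝒩 i)).filter (fun w => ¬ isAnc t (childV i) w), ω w

/-- The point `M(t, 𝒩, ω) = (α₁β₁, …, α_{n-1}β_{n-1})`. -/
noncomputable def MPoint {n : ℕ} (t : PTree n) (𝒩 : Finset (Finset (Fin (n - 1))))
    (ω : Fin n → ℤ) : Vec (n - 1) :=
  fun i => ((alphaN t 𝒩 ω i : ℤ) : ℝ) * ((betaN t 𝒩 ω i : ℤ) : ℝ)

/-- The Loday realization `P_{(t,ω)}` of the operahedron. -/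
noncomputable def Loday {n : ℕ} (t : PTree n) (ω : Fin n → ℤ) : Set (Vec (n - 1)) :=
  convexHull ℝ {x | ∃ 𝒩, IsMaxNesting t 𝒩 ∧ x = MPoint t 𝒩 ω}

/-- The face of `P_{(t,ω)}` associated to a nesting `𝒩`: the convex hull of the points
`M(t,𝒩',ω)` over the maximal nestings `𝒩' ⊇ 𝒩`. -/
noncomputable def faceOfNesting {n : ℕ} (t : PTree n) (ω : Fin n → ℤ)
    (𝒩 : Finset (Finset (Fin (n - 1)))) : Set (Vec (n - 1)) :=
  convexHull ℝ {x | ∃ 𝒩', IsMaxNesting t 𝒩' ∧ 𝒩 ⊆ 𝒩' ∧ x = MPoint t 𝒩' ω}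

/-- A pair `(I, J) ∈ D(m)`: disjoint subsets of the same cardinality with `min (I ∪ J) ∈ I`. -/
def DPair {m : ℕ} (I J : Finset (Fin m)) : Prop :=
  I.card = J.card ∧ Disjoint I J ∧ ∃ i ∈ I, ∀ x ∈ I ∪ J, i ≤ x

/-- A trinary vector: all coordinates are `0`, `1` or `-1`. -/
def Trinary {m : ℕ} (u : Vec m) : Prop := ∀ i, u i = 0 ∨ u i = 1 ∨ u i = -1

/-- A balanced vector: same number of coordinates equal to `1` and to `-1`. -/
def BalancedVec {m : ℕ} (u : Vec m) : Prop :=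
  (Finset.univ.filter fun i => u i = 1).card = (Finset.univ.filter fun i => u i = -1).card

/-- The first nonzero coordinate is `1`. -/
def FirstPos {m : ℕ} (u : Vec m) : Prop :=
  ∀ i, u i ≠ 0 → (∀ j, j < i → u j = 0) → u i = 1

/-!
Only the minimal nests of `j` and `j'` change under the covering move, because on a maximal
nesting `min𝒩` is a bijection from the edges onto the nests. The minimal nest of `j` grows
strictly; both factors of `α_j β_j` are monotone in the nest and their sum, the weight of the
nest, grows strictly, so `α_j β_j` increases. On the other hand `∑ᵢ αᵢ βᵢ` does not depend on
the maximal nesting: two distinct vertices `u, w` are separated by exactly one edge `i` with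
`u, w ∈ t(min𝒩(i))`, namely the edge of the `u`–`w` path whose minimal nest is largest, so
`2 ∑ᵢ αᵢ βᵢ = (∑ ω)² - ∑ ω²`. Hence the change at `j'` is the opposite of the change at `j`, and
a strictly decreasing `v` pairs with the edge vector to `x (v_j - v_{j'}) > 0`.
-/

lemma Finset.sum_sum_ite_eq_sq_sub {ι R : Type*} [Fintype ι] [DecidableEq ι] [CommRing R]
    (f : ι → R) :
    ∑ u, ∑ w, (if u = w then 0 else f u * f w) = (∑ u, f u) ^ 2 - ∑ u, f u ^ 2 := by
  rw [sq, Finset.sum_mul_sum, ← Finset.sum_sub_distrib]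
  refine Finset.sum_congr rfl fun u _ => ?_
  have hdiag : f u ^ 2 = ∑ w, if u = w then f u * f w else 0 := by simp [sq]
  rw [hdiag, ← Finset.sum_sub_distrib]
  refine Finset.sum_congr rfl fun w _ => ?_
  split_ifs <;> simp

lemma eq_ite_of_sum_eq_zero {ι M : Type*} [Fintype ι] [DecidableEq ι] [AddCommGroup M]
    {d : ι → M} {j j' : ι} (hjj' : j ≠ j') (hzero : ∀ i, i ≠ j → i ≠ j' → d i = 0)
    (hsum : ∑ i, d i = 0) (i : ι) : d i = if i = j then d j else if i = j' then -d j else 0 := by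
  rw [Finset.sum_eq_add j j' hjj' (fun c _ hc => hzero c hc.1 hc.2) (by simp) (by simp)] at hsum
  split_ifs with hj hj'
  · rw [hj]
  · rw [hj', eq_neg_of_add_eq_zero_right hsum]
  · exact hzero i hj hj'

lemma dot_ite_ite {m : ℕ} (v : Vec m) {j j' : Fin m} (hjj' : j ≠ j') (x : ℝ) :
    dot v (fun i => if i = j then x else if i = j' then -x else 0) = x * (v j - v j') := by
  rw [dot, Finset.sum_eq_add j j' hjj' (fun c _ hc => by simp [hc.1, hc.2]) (by simp) (by simp)]
  simp [hjj'.symm]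
  ring

namespace PTree

open Finset Relation

variable {n : ℕ} {t : PTree n}

variable (t) in
def Anc (u w : Fin n) : Prop := ∃ k, t.parent^[k] w = u

lemma parent_val_le (v : Fin n) : (t.parent v).val ≤ v.val := by
  rcases Nat.eq_zero_or_pos v.val with h | h
  · rw [t.parent_zero v h]
  · exact (t.parent_lt v h).le

lemma iterate_parent_val_le (k : ℕ) (v : Fin n) : (t.parent^[k] v).val ≤ v.val := by
  induction k with
  | zero => rfl
  | succ k ih =>
    rw [Function.iterate_succ_apply']
    exact (parent_val_le _).trans ih

lemma anc_refl (u : Fin n) : t.Anc u u := ⟨0, rfl⟩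

lemma anc_parent (w : Fin n) : t.Anc (t.parent w) w := ⟨1, rfl⟩

lemma Anc.val_le {u w : Fin n} (h : t.Anc u w) : u.val ≤ w.val := by
  obtain ⟨k, rfl⟩ := h
  exact iterate_parent_val_le k w

lemma Anc.trans {u v w : Fin n} (h₁ : t.Anc u v) (h₂ : t.Anc v w) : t.Anc u w := by
  obtain ⟨a, rfl⟩ := h₁
  obtain ⟨b, rfl⟩ := h₂
  exact ⟨a + b, Function.iterate_add_apply ..⟩

lemma Anc.of_parent {u w : Fin n} (h : t.Anc u (t.parent w)) : t.Anc u w :=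
  h.trans (anc_parent w)

lemma Anc.parent_of_ne {u w : Fin n} (h : t.Anc u w) (hne : u ≠ w) : t.Anc u (t.parent w) := by
  obtain ⟨_ | k, hk⟩ := h
  · exact absurd hk.symm hne
  · exact ⟨k, hk⟩

lemma not_anc_of_val_lt {u w : Fin n} (h : w.val < u.val) : ¬ t.Anc u w :=
  fun hanc => hanc.val_le.not_gt h

lemma iterate_parent_val_eq_zero {k : ℕ} {v : Fin n} (hv : v.val ≤ k) :
    (t.parent^[k] v).val = 0 := by
  induction k generalizing v with
  | zero => simpa using hv
  | succ k ih =>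
    rcases Nat.eq_zero_or_pos v.val with h | h
    · exact Nat.le_zero.1 ((iterate_parent_val_le _ v).trans h.le)
    · exact ih (by have := t.parent_lt v h; omega)

lemma isAnc_iff_anc {u w : Fin n} : isAnc t u w ↔ t.Anc u w := by
  refine ⟨fun ⟨k, _, hk⟩ => ⟨k, hk⟩, fun ⟨k, hk⟩ => ?_⟩
  by_cases hk_le : k ≤ n
  · exact ⟨k, mem_range.2 (Nat.lt_succ_of_le hk_le), hk⟩
  · -- both iterates have reached the root
    refine ⟨w.val, mem_range.2 (by omega), Fin.ext ?_⟩
    rw [← hk, iterate_parent_val_eq_zero le_rfl, iterate_parent_val_eq_zero (by omega)]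

lemma childV_injective : Function.Injective (childV (n := n)) := fun _ _ h =>
  Fin.ext (Nat.succ_injective (congrArg Fin.val h))

lemma exists_childV_eq {u : Fin n} (hu : 0 < u.val) : ∃ e : Fin (n - 1), childV e = u :=
  ⟨⟨u.val - 1, by omega⟩, Fin.ext (by simp only [childV]; omega)⟩

lemma parent_childV_lt (e : Fin (n - 1)) : (t.parent (childV e)).val < (childV e).val :=
  t.parent_lt _ (Nat.succ_pos _)

lemma edgeAdj_symm {e f : Fin (n - 1)} (h : edgeAdj t e f) : edgeAdj t f e := by
  obtain ⟨hne, v, hv⟩ := h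
  exact ⟨hne.symm, v, by rwa [inter_comm]⟩

lemma edgeAdj_of_eq_or_eq {e f : Fin (n - 1)} (hne : e ≠ f) {v : Fin n}
    (he : v = childV e ∨ v = t.parent (childV e)) (hf : v = childV f ∨ v = t.parent (childV f)) :
    edgeAdj t e f :=
  ⟨hne, v, by simp only [mem_inter, mem_insert, mem_singleton]; exact ⟨he, hf⟩⟩

lemma mem_nestVtx {N : Finset (Fin (n - 1))} {v : Fin n} :
    v ∈ nestVtx t N ↔ ∃ e ∈ N, v = childV e ∨ v = t.parent (childV e) := by
  simp [nestVtx]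

lemma childV_mem_nestVtx {N : Finset (Fin (n - 1))} {e : Fin (n - 1)} (he : e ∈ N) :
    childV e ∈ nestVtx t N :=
  mem_nestVtx.2 ⟨e, he, Or.inl rfl⟩

lemma parent_childV_mem_nestVtx {N : Finset (Fin (n - 1))} {e : Fin (n - 1)} (he : e ∈ N) :
    t.parent (childV e) ∈ nestVtx t N :=
  mem_nestVtx.2 ⟨e, he, Or.inr rfl⟩

lemma nestVtx_mono {N M : Finset (Fin (n - 1))} (h : N ⊆ M) : nestVtx t N ⊆ nestVtx t M :=
  biUnion_subset_biUnion_of_subset_left _ h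

variable (t) in
def EdgeConnected (N : Finset (Fin (n - 1))) : Prop :=
  ∀ e ∈ N, ∀ f ∈ N, ReflTransGen (fun a b => a ∈ N ∧ b ∈ N ∧ edgeAdj t a b) e f

lemma edgeConnected_singleton (e : Fin (n - 1)) : EdgeConnected t {e} := by
  intro a ha b hb
  rw [mem_singleton] at ha hb
  rw [ha, hb]

lemma edgeConnected_insert {N : Finset (Fin (n - 1))} {e f : Fin (n - 1)}
    (hN : EdgeConnected t N) (hf : f ∈ N) (hef : edgeAdj t e f) :
    EdgeConnected t (insert e N) := by
  have lift : ∀ a ∈ N, ∀ b ∈ N,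
      ReflTransGen (fun a b => a ∈ insert e N ∧ b ∈ insert e N ∧ edgeAdj t a b) a b :=
    fun a ha b hb => ReflTransGen.mono (fun _ _ ⟨hx, hy, hxy⟩ =>
      ⟨mem_insert_of_mem hx, mem_insert_of_mem hy, hxy⟩) _ _ (hN a ha b hb)
  intro a ha b hb
  rcases mem_insert.1 ha with rfl | haN <;> rcases mem_insert.1 hb with rfl | hbN
  · exact .refl
  · exact .head ⟨mem_insert_self _ _, mem_insert_of_mem hf, hef⟩ (lift f hf b hbN)
  · exact .tail (lift a haN f hf) ⟨mem_insert_of_mem hf, mem_insert_self _ _, edgeAdj_symm hef⟩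
  · exact lift a haN b hbN

open scoped Classical in
variable (t) in
/-- The edges of the tree path between `u` and `w`, encoded as the edges whose lower endpoint is
an ancestor of exactly one of `u`, `w`. -/
noncomputable def pathEdges (u w : Fin n) : Finset (Fin (n - 1)) :=
  univ.filter fun i => Xor (t.Anc (childV i) u) (t.Anc (childV i) w)

lemma mem_pathEdges {u w : Fin n} {i : Fin (n - 1)} :
    i ∈ pathEdges t u w ↔ Xor (t.Anc (childV i) u) (t.Anc (childV i) w) := by
  simp [pathEdges]

lemma pathEdges_comm (u w : Fin n) : pathEdges t u w = pathEdges t w u := by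
  ext i
  rw [mem_pathEdges, mem_pathEdges, xor_comm]

lemma pathEdges_self (u : Fin n) : pathEdges t u u = ∅ := by
  ext i
  simp [mem_pathEdges]

lemma pathEdges_childV {e : Fin (n - 1)} {w : Fin n} (hw : w.val < (childV e).val) :
    pathEdges t (childV e) w = insert e (pathEdges t (t.parent (childV e)) w) ∧
      e ∉ pathEdges t (t.parent (childV e)) w := by
  have hew : ¬ t.Anc (childV e) w := not_anc_of_val_lt hw
  refine ⟨?_, ?_⟩
  · ext i
    rw [mem_insert, mem_pathEdges, mem_pathEdges]
    by_cases hi : i = e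
    · subst hi
      simp [anc_refl, hew]
    · have hci : childV i ≠ childV e := childV_injective.ne hi
      rw [show t.Anc (childV i) (childV e) ↔ t.Anc (childV i) (t.parent (childV e)) from
        ⟨fun h => h.parent_of_ne hci, Anc.of_parent⟩]
      simp [hi]
  · simp [mem_pathEdges, hew, not_anc_of_val_lt (parent_childV_lt e)]

lemma pathEdges_connects {u w : Fin n} (huw : u ≠ w) :
    u ∈ nestVtx t (pathEdges t u w) ∧ w ∈ nestVtx t (pathEdges t u w) ∧
      EdgeConnected t (pathEdges t u w) := by
  induction hm : u.val + w.val using Nat.strong_induction_on generalizing u w with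
  | _ m ih =>
    wlog hlt : w.val < u.val generalizing u w
    · rw [pathEdges_comm]
      obtain ⟨hw, hu, hconn⟩ :=
        this huw.symm (by omega) (by have := Fin.val_ne_of_ne huw; omega)
      exact ⟨hu, hw, hconn⟩
    obtain ⟨e, rfl⟩ := exists_childV_eq (Nat.zero_le _ |>.trans_lt hlt)
    obtain ⟨hpeel, he⟩ := pathEdges_childV (t := t) hlt
    rw [hpeel]
    by_cases hpw : t.parent (childV e) = w
    · subst hpw
      rw [pathEdges_self]
      exact ⟨childV_mem_nestVtx (mem_singleton_self e),
        parent_childV_mem_nestVtx (mem_singleton_self e), edgeConnected_singleton e⟩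
    obtain ⟨hp, hw, hconn⟩ := ih _ (by have := parent_childV_lt (t := t) e; omega) hpw rfl
    obtain ⟨f, hf, hpf⟩ := mem_nestVtx.1 hp
    have hef : edgeAdj t e f :=
      edgeAdj_of_eq_or_eq (ne_of_mem_of_not_mem hf he).symm (Or.inr rfl) hpf
    exact ⟨childV_mem_nestVtx (mem_insert_self e _), nestVtx_mono (subset_insert e _) hw,
      edgeConnected_insert hconn hf hef⟩

lemma anc_parent_childV_of_edgeAdj {u : Fin n} {b c : Fin (n - 1)}
    (h : t.Anc u (t.parent (childV b))) (hc : u ≠ childV c) (hbc : edgeAdj t b c) :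
    t.Anc u (t.parent (childV c)) := by
  obtain ⟨-, v, hv⟩ := hbc
  simp only [mem_inter, mem_insert, mem_singleton] at hv
  obtain ⟨hvb, hvc⟩ := hv
  have huv : t.Anc u v := by
    rcases hvb with rfl | rfl
    exacts [h.of_parent, h]
  rcases hvc with rfl | rfl
  exacts [huv.parent_of_ne hc, huv]

lemma anc_of_forall_childV_ne {N : Finset (Fin (n - 1))} (hN : EdgeConnected t N) {u : Fin n}
    (hu : u ∈ nestVtx t N) (hnc : ∀ f ∈ N, childV f ≠ u) {x : Fin n} (hx : x ∈ nestVtx t N) :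
    t.Anc u x := by
  obtain ⟨f₀, hf₀, hu'⟩ := mem_nestVtx.1 hu
  have hu₀ : t.Anc u (t.parent (childV f₀)) := by
    rcases hu' with hu' | hu'
    exacts [absurd hu'.symm (hnc f₀ hf₀), hu' ▸ anc_refl u]
  have key : ∀ f ∈ N, t.Anc u (t.parent (childV f)) := by
    intro f hf
    induction hN f₀ hf₀ f hf with
    | refl => exact hu₀
    | tail _ hbc ih => exact anc_parent_childV_of_edgeAdj (ih hbc.1) (hnc _ hbc.2.1).symm hbc.2.2
  obtain ⟨f, hf, rfl | rfl⟩ := mem_nestVtx.1 hx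
  exacts [(key f hf).of_parent, key f hf]

lemma pathEdges_subset {N : Finset (Fin (n - 1))} (hN : EdgeConnected t N) {u w : Fin n}
    (hu : u ∈ nestVtx t N) (hw : w ∈ nestVtx t N) : pathEdges t u w ⊆ N := by
  induction hm : u.val + w.val using Nat.strong_induction_on generalizing u w with
  | _ m ih =>
    wlog hlt : w.val < u.val generalizing u w
    · rcases eq_or_ne u w with rfl | huw
      · simp [pathEdges_self]
      · rw [pathEdges_comm]
        exact this hw hu (by omega) (by have := Fin.val_ne_of_ne huw; omega)
    obtain ⟨e, he, rfl⟩ : ∃ e ∈ N, childV e = u := by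
      by_contra! hnc
      exact not_anc_of_val_lt hlt (anc_of_forall_childV_ne hN hu hnc hw)
    rw [(pathEdges_childV hlt).1]
    exact insert_subset he
      (ih _ (by have := parent_childV_lt (t := t) e; omega) (parent_childV_mem_nestVtx he) hw rfl)

lemma exists_mem_nestVtx_notMem_of_ssubset {N K : Finset (Fin (n - 1))} (hN : EdgeConnected t N)
    (hNK : N ⊂ K) : ∃ z ∈ nestVtx t K, z ∉ nestVtx t N := by
  obtain ⟨e, heK, heN⟩ := exists_of_ssubset hNK
  by_cases hc : childV e ∈ nestVtx t N
  · refine ⟨t.parent (childV e), parent_childV_mem_nestVtx heK, fun hp => ?_⟩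
    have hnc : ∀ f ∈ N, childV f ≠ childV e := fun f hf h => heN (childV_injective h ▸ hf)
    exact not_anc_of_val_lt (parent_childV_lt e) (anc_of_forall_childV_ne hN hc hnc hp)
  · exact ⟨childV e, childV_mem_nestVtx heK, hc⟩

variable {𝒩 : Finset (Finset (Fin (n - 1)))}

lemma _root_.IsNesting.subset_or_subset (h : IsNesting t 𝒩) {N M : Finset (Fin (n - 1))}
    (hN : N ∈ 𝒩) (hM : M ∈ 𝒩) {e f : Fin (n - 1)} (he : e ∈ N) (hf : f ∈ M)
    (hef : e = f ∨ edgeAdj t e f) : N ⊆ M ∨ M ⊆ N := by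
  rcases h.2.2 N hN M hM with hNM | hMN | ⟨hdisj, hnadj⟩
  · exact .inl hNM
  · exact .inr hMN
  · rcases hef with rfl | hef
    exacts [absurd hf (disjoint_left.1 hdisj he), absurd hef (hnadj e he f hf)]

lemma minNest_subset {i : Fin (n - 1)} {P : Finset (Fin (n - 1))} (hP : P ∈ 𝒩) (hi : i ∈ P) :
    minNest 𝒩 i ⊆ P :=
  inf_le (f := id) (mem_filter.2 ⟨hP, hi⟩)

/-- The nests containing `i` form a chain, so their infimum is one of them. -/
lemma _root_.IsNesting.minNest_mem_filter (h : IsNesting t 𝒩) (i : Fin (n - 1)) :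
    minNest 𝒩 i ∈ 𝒩.filter (i ∈ ·) := by
  have hne : (𝒩.filter (i ∈ ·)).Nonempty := ⟨univ, mem_filter.2 ⟨h.2.1, mem_univ i⟩⟩
  rw [minNest, ← inf'_eq_inf hne]
  refine inf'_mem _ (fun P hP Q hQ => ?_) _ hne _ fun P hP => hP
  obtain ⟨hP𝒩, hiP⟩ := mem_filter.1 (mem_coe.1 hP)
  obtain ⟨hQ𝒩, hiQ⟩ := mem_filter.1 (mem_coe.1 hQ)
  rcases h.subset_or_subset hP𝒩 hQ𝒩 hiP hiQ (.inl rfl) with hPQ | hQP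
  · rwa [inf_eq_left.2 hPQ]
  · rwa [inf_eq_right.2 hQP]

lemma _root_.IsNesting.minNest_mem (h : IsNesting t 𝒩) (i : Fin (n - 1)) : minNest 𝒩 i ∈ 𝒩 :=
  (mem_filter.1 (h.minNest_mem_filter i)).1

lemma _root_.IsNesting.mem_minNest (h : IsNesting t 𝒩) (i : Fin (n - 1)) : i ∈ minNest 𝒩 i :=
  (mem_filter.1 (h.minNest_mem_filter i)).2

/-- The edge of `S` with the largest minimal nest sees all of `S` in that nest. -/
lemma _root_.IsNesting.exists_subset_minNest (h : IsNesting t 𝒩) {S : Finset (Fin (n - 1))}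
    (hS : EdgeConnected t S) (hne : S.Nonempty) : ∃ i ∈ S, S ⊆ minNest 𝒩 i := by
  obtain ⟨i, hi, hmax⟩ := exists_max_image S (fun i => (minNest 𝒩 i).card) hne
  refine ⟨i, hi, fun f hf => ?_⟩
  induction hS i hi f hf with
  | refl => exact h.mem_minNest i
  | @tail x y _ hxy hx =>
    obtain ⟨hxS, hy, hadj⟩ := hxy
    rcases h.subset_or_subset (h.minNest_mem i) (h.minNest_mem y) (hx hxS) (h.mem_minNest y)
      (.inr hadj) with hsub | hsub
    · rw [eq_of_subset_of_card_le hsub (hmax y hy)]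
      exact h.mem_minNest y
    · exact hsub (h.mem_minNest y)

lemma _root_.IsNesting.exists_minNest_eq (hn : 2 ≤ n) (h : IsNesting t 𝒩)
    {M : Finset (Fin (n - 1))} (hM : M ∈ 𝒩) : ∃ i, minNest 𝒩 i = M := by
  have hMn : IsNest t M := h.1 M hM
  have hne : M.Nonempty := hMn.1.elim id fun hM => hM ▸ univ_nonempty_iff.2 ⟨⟨0, by omega⟩⟩
  obtain ⟨i, hi, hMi⟩ := h.exists_subset_minNest hMn.2 hne
  exact ⟨i, (minNest_subset hM hi).antisymm hMi⟩

lemma _root_.IsMaxNesting.minNest_injective (hn : 2 ≤ n) (h : IsMaxNesting t 𝒩) :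
    Function.Injective (minNest 𝒩) := by
  have himage : univ.image (minNest 𝒩) = 𝒩 := by
    refine Subset.antisymm (fun M hM => ?_) (fun M hM => ?_)
    · obtain ⟨i, -, rfl⟩ := mem_image.1 hM
      exact h.1.minNest_mem i
    · obtain ⟨i, rfl⟩ := h.1.exists_minNest_eq hn hM
      exact mem_image_of_mem _ (mem_univ i)
  have hcard : (univ.image (minNest 𝒩)).card = (univ : Finset (Fin (n - 1))).card := by
    rw [himage, h.2, card_univ, Fintype.card_fin]
  simpa using injOn_of_card_image_eq hcard

lemma _root_.IsMaxNesting.existsUnique_pathEdges_subset_minNest (hn : 2 ≤ n)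
    (h : IsMaxNesting t 𝒩) {u w : Fin n} (huw : u ≠ w) :
    ∃! i, i ∈ pathEdges t u w ∧ pathEdges t u w ⊆ minNest 𝒩 i := by
  obtain ⟨hu, -, hconn⟩ := pathEdges_connects (t := t) huw
  obtain ⟨e, he, -⟩ := mem_nestVtx.1 hu
  obtain ⟨i, hi, hsub⟩ := h.1.exists_subset_minNest hconn ⟨e, he⟩
  refine ⟨i, ⟨hi, hsub⟩, fun k ⟨hk, hsubk⟩ => h.minNest_injective hn ?_⟩
  exact (minNest_subset (h.1.minNest_mem i) (hsub hk)).antisymm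
    (minNest_subset (h.1.minNest_mem k) (hsubk hi))

variable (t) in
/-- The vertices of the subtree `t₁` obtained by cutting `t(P)` at the edge `i`. -/
def lowerPart (P : Finset (Fin (n - 1))) (i : Fin (n - 1)) : Finset (Fin n) :=
  (nestVtx t P).filter fun w => isAnc t (childV i) w

variable (t) in
/-- The vertices of the subtree `t₂` obtained by cutting `t(P)` at the edge `i`. -/
def upperPart (P : Finset (Fin (n - 1))) (i : Fin (n - 1)) : Finset (Fin n) :=
  (nestVtx t P).filter fun w => ¬ isAnc t (childV i) w

variable (t) in
def alphaIn (P : Finset (Fin (n - 1))) (ω : Fin n → ℤ) (i : Fin (n - 1)) : ℤ :=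
  ∑ w ∈ lowerPart t P i, ω w

variable (t) in
def betaIn (P : Finset (Fin (n - 1))) (ω : Fin n → ℤ) (i : Fin (n - 1)) : ℤ :=
  ∑ w ∈ upperPart t P i, ω w

lemma alphaN_eq_alphaIn (ω : Fin n → ℤ) (i : Fin (n - 1)) :
    alphaN t 𝒩 ω i = alphaIn t (minNest 𝒩 i) ω i := rfl

lemma betaN_eq_betaIn (ω : Fin n → ℤ) (i : Fin (n - 1)) :
    betaN t 𝒩 ω i = betaIn t (minNest 𝒩 i) ω i := rfl

section Weights

variable {ω : Fin n → ℤ} {P Q : Finset (Fin (n - 1))} {i : Fin (n - 1)}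

lemma mem_lowerPart {w : Fin n} :
    w ∈ lowerPart t P i ↔ w ∈ nestVtx t P ∧ t.Anc (childV i) w := by
  rw [lowerPart, mem_filter, isAnc_iff_anc]

lemma mem_upperPart {w : Fin n} :
    w ∈ upperPart t P i ↔ w ∈ nestVtx t P ∧ ¬ t.Anc (childV i) w := by
  rw [upperPart, mem_filter, isAnc_iff_anc]

lemma alphaIn_add_betaIn : alphaIn t P ω i + betaIn t P ω i = ∑ w ∈ nestVtx t P, ω w :=
  sum_filter_add_sum_filter_not _ _ _

lemma alphaIn_pos (hω : ∀ u, 0 < ω u) (hi : i ∈ P) : 0 < alphaIn t P ω i :=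
  sum_pos (fun w _ => hω w) ⟨childV i, mem_lowerPart.2 ⟨childV_mem_nestVtx hi, anc_refl _⟩⟩

lemma betaIn_pos (hω : ∀ u, 0 < ω u) (hi : i ∈ P) : 0 < betaIn t P ω i :=
  sum_pos (fun w _ => hω w) ⟨t.parent (childV i), mem_upperPart.2
    ⟨parent_childV_mem_nestVtx hi, not_anc_of_val_lt (parent_childV_lt i)⟩⟩

lemma alphaIn_mono (hω : ∀ u, 0 < ω u) (h : P ⊆ Q) : alphaIn t P ω i ≤ alphaIn t Q ω i :=
  sum_le_sum_of_subset_of_nonneg (filter_subset_filter _ (nestVtx_mono h))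
    fun w _ _ => (hω w).le

lemma betaIn_mono (hω : ∀ u, 0 < ω u) (h : P ⊆ Q) : betaIn t P ω i ≤ betaIn t Q ω i :=
  sum_le_sum_of_subset_of_nonneg (filter_subset_filter _ (nestVtx_mono h))
    fun w _ _ => (hω w).le

/-- Both factors weakly grow, and their sum, the weight of `t(P)`, grows strictly. -/
lemma alphaIn_mul_betaIn_lt (hω : ∀ u, 0 < ω u) (hP : EdgeConnected t P) (hPQ : P ⊂ Q)
    (hi : i ∈ P) : alphaIn t P ω i * betaIn t P ω i < alphaIn t Q ω i * betaIn t Q ω i := by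
  obtain ⟨z, hzQ, hzP⟩ := exists_mem_nestVtx_notMem_of_ssubset hP hPQ
  have hsum : ∑ w ∈ nestVtx t P, ω w < ∑ w ∈ nestVtx t Q, ω w :=
    sum_lt_sum_of_subset (nestVtx_mono hPQ.subset) hzQ hzP (hω z) fun w _ _ => (hω w).le
  rw [← alphaIn_add_betaIn, ← alphaIn_add_betaIn] at hsum
  have ha := alphaIn_mono (t := t) (i := i) hω hPQ.subset
  have hb := betaIn_mono (t := t) (i := i) hω hPQ.subset
  nlinarith [alphaIn_pos (t := t) hω hi, betaIn_pos (t := t) hω hi]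

end Weights

section Cuts

variable {P : Finset (Fin (n - 1))} {i : Fin (n - 1)} {u w : Fin n}

lemma alphaIn_mul_betaIn_eq_sum (ω : Fin n → ℤ) :
    alphaIn t P ω i * betaIn t P ω i =
      ∑ u, ∑ w, if u ∈ lowerPart t P i ∧ w ∈ upperPart t P i then ω u * ω w else 0 := by
  simp_rw [← ite_zero_mul_ite_zero, ← sum_mul_sum, sum_ite_mem, univ_inter]
  rfl

lemma notMem_upperPart_of_mem_lowerPart (hu : u ∈ lowerPart t P i) :
    u ∉ upperPart t P i :=
  fun hu' => (mem_upperPart.1 hu').2 (mem_lowerPart.1 hu).2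

lemma mem_lowerPart_and_mem_upperPart_or_iff (hP : EdgeConnected t P) (huw : u ≠ w) :
    (u ∈ lowerPart t P i ∧ w ∈ upperPart t P i) ∨ (w ∈ lowerPart t P i ∧ u ∈ upperPart t P i) ↔
      i ∈ pathEdges t u w ∧ pathEdges t u w ⊆ P := by
  simp only [mem_lowerPart, mem_upperPart, mem_pathEdges, Xor]
  constructor
  · rintro (⟨⟨hu, hiu⟩, hw, hiw⟩ | ⟨⟨hw, hiw⟩, hu, hiu⟩)
    · exact ⟨.inl ⟨hiu, hiw⟩, pathEdges_subset hP hu hw⟩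
    · exact ⟨.inr ⟨hiw, hiu⟩, pathEdges_subset hP hu hw⟩
  · rintro ⟨hi, hsub⟩
    obtain ⟨hu, hw, -⟩ := pathEdges_connects (t := t) huw
    have hu := nestVtx_mono hsub hu
    have hw := nestVtx_mono hsub hw
    rcases hi with ⟨hiu, hiw⟩ | ⟨hiw, hiu⟩
    exacts [.inl ⟨⟨hu, hiu⟩, hw, hiw⟩, .inr ⟨⟨hw, hiw⟩, hu, hiu⟩]

end Cuts

variable (t) in
def cutWeight (𝒩 : Finset (Finset (Fin (n - 1)))) (ω : Fin n → ℤ) (i : Fin (n - 1))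
    (u w : Fin n) : ℤ :=
  if u ∈ lowerPart t (minNest 𝒩 i) i ∧ w ∈ upperPart t (minNest 𝒩 i) i then ω u * ω w else 0

/-- Two distinct vertices are separated, in one order or the other, by exactly one edge: the
edge of the path between them whose minimal nest is largest. -/
lemma _root_.IsMaxNesting.sum_cutWeight_add_swap (hn : 2 ≤ n) (h : IsMaxNesting t 𝒩)
    (ω : Fin n → ℤ) (u w : Fin n) :
    ∑ i, (cutWeight t 𝒩 ω i u w + cutWeight t 𝒩 ω i w u) = if u = w then 0 else ω u * ω w := by
  have hcut : ∀ i, cutWeight t 𝒩 ω i u w + cutWeight t 𝒩 ω i w u =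
      if (u ∈ lowerPart t (minNest 𝒩 i) i ∧ w ∈ upperPart t (minNest 𝒩 i) i) ∨
        (w ∈ lowerPart t (minNest 𝒩 i) i ∧ u ∈ upperPart t (minNest 𝒩 i) i)
      then ω u * ω w else 0 := by
    intro i
    unfold cutWeight
    by_cases h₁ : u ∈ lowerPart t (minNest 𝒩 i) i ∧ w ∈ upperPart t (minNest 𝒩 i) i
    · simp [h₁, notMem_upperPart_of_mem_lowerPart h₁.1]
    · by_cases h₂ : w ∈ lowerPart t (minNest 𝒩 i) i ∧ u ∈ upperPart t (minNest 𝒩 i) i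
      · simp [h₁, h₂, mul_comm]
      · simp [h₁, h₂]
  simp_rw [hcut]
  split_ifs with huw
  · subst huw
    refine sum_eq_zero fun i _ => if_neg ?_
    rintro (⟨h₁, h₂⟩ | ⟨h₁, h₂⟩) <;> exact notMem_upperPart_of_mem_lowerPart h₁ h₂
  · simp_rw [fun i => mem_lowerPart_and_mem_upperPart_or_iff (i := i)
      (h.1.1 _ (h.1.minNest_mem i)).2 huw]
    obtain ⟨i₀, hi₀, huniq⟩ := h.existsUnique_pathEdges_subset_minNest hn huw
    rw [sum_eq_single i₀ (fun i _ hi => if_neg fun hc => hi (huniq i hc)) (by simp), if_pos hi₀]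

theorem _root_.IsMaxNesting.two_mul_sum_alphaN_mul_betaN (hn : 2 ≤ n) (h : IsMaxNesting t 𝒩)
    (ω : Fin n → ℤ) :
    2 * ∑ i, alphaN t 𝒩 ω i * betaN t 𝒩 ω i = (∑ u, ω u) ^ 2 - ∑ u, ω u ^ 2 := by
  have hexpand : ∑ i, alphaN t 𝒩 ω i * betaN t 𝒩 ω i = ∑ u, ∑ w, ∑ i, cutWeight t 𝒩 ω i u w := by
    simp only [alphaN_eq_alphaIn, betaN_eq_betaIn, alphaIn_mul_betaIn_eq_sum, cutWeight]
    rw [sum_comm]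
    exact sum_congr rfl fun u _ => sum_comm
  calc 2 * ∑ i, alphaN t 𝒩 ω i * betaN t 𝒩 ω i
      = ∑ u, ∑ w, ∑ i, cutWeight t 𝒩 ω i u w + ∑ u, ∑ w, ∑ i, cutWeight t 𝒩 ω i w u := by
        rw [hexpand, two_mul, sum_comm (f := fun u w => ∑ i, cutWeight t 𝒩 ω i w u)]
    _ = ∑ u, ∑ w, (if u = w then 0 else ω u * ω w) := by
        simp_rw [← sum_add_distrib, h.sum_cutWeight_add_swap hn]
    _ = (∑ u, ω u) ^ 2 - ∑ u, ω u ^ 2 := sum_sum_ite_eq_sq_sub ω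

lemma MPoint_lt_of_minNest_ssubset {𝒩' : Finset (Finset (Fin (n - 1)))} {ω : Fin n → ℤ}
    (hω : ∀ u, 0 < ω u) (h : IsNesting t 𝒩) {i : Fin (n - 1)} (hi : minNest 𝒩 i ⊂ minNest 𝒩' i) :
    MPoint t 𝒩 ω i < MPoint t 𝒩' ω i := by
  have hlt := alphaIn_mul_betaIn_lt hω (h.1 _ (h.minNest_mem i)).2 hi (h.mem_minNest i)
  simp only [MPoint, alphaN_eq_alphaIn, betaN_eq_betaIn]
  exact_mod_cast hlt

lemma _root_.IsMaxNesting.sum_MPoint_eq (hn : 2 ≤ n) {𝒩' : Finset (Finset (Fin (n - 1)))}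
    (h : IsMaxNesting t 𝒩) (h' : IsMaxNesting t 𝒩') (ω : Fin n → ℤ) :
    ∑ i, MPoint t 𝒩 ω i = ∑ i, MPoint t 𝒩' ω i := by
  have h₁ := h.two_mul_sum_alphaN_mul_betaN hn ω
  have h₂ := h'.two_mul_sum_alphaN_mul_betaN hn ω
  have hsum : ∑ i, alphaN t 𝒩 ω i * betaN t 𝒩 ω i = ∑ i, alphaN t 𝒩' ω i * betaN t 𝒩' ω i := by
    linarith
  simp only [MPoint]
  exact_mod_cast hsum

section Exchange

variable {𝒩' : Finset (Finset (Fin (n - 1)))} {N N' : Finset (Fin (n - 1))}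

lemma minNest_ssubset_of_exchange (hn : 2 ≤ n) (h' : IsMaxNesting t 𝒩') (hNn : N ∉ 𝒩')
    (hsub : 𝒩'.erase N' ⊆ 𝒩) {j j' : Fin (n - 1)} (hj : minNest 𝒩 j = N)
    (hj' : minNest 𝒩' j' = N') (hjj' : j ≠ j') : minNest 𝒩 j ⊂ minNest 𝒩' j := by
  have hK' : minNest 𝒩' j ∈ 𝒩' := h'.1.minNest_mem j
  have hKN' : minNest 𝒩' j ≠ N' := fun hc => hjj' (h'.minNest_injective hn (hc.trans hj'.symm))
  have hK : minNest 𝒩' j ∈ 𝒩 := hsub (mem_erase.2 ⟨hKN', hK'⟩)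
  refine (minNest_subset hK (h'.1.mem_minNest j)).ssubset_of_ne fun hc => hNn ?_
  rwa [← hj, hc]

lemma minNest_eq_of_exchange (h : IsNesting t 𝒩) (h' : IsNesting t 𝒩') (hsub : 𝒩.erase N ⊆ 𝒩')
    (hsub' : 𝒩'.erase N' ⊆ 𝒩) {i : Fin (n - 1)} (hi : minNest 𝒩 i ≠ N)
    (hi' : minNest 𝒩' i ≠ N') : minNest 𝒩' i = minNest 𝒩 i :=
  (minNest_subset (hsub (mem_erase.2 ⟨hi, h.minNest_mem i⟩)) (h.mem_minNest i)).antisymm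
    (minNest_subset (hsub' (mem_erase.2 ⟨hi', h'.minNest_mem i⟩)) (h'.mem_minNest i))

end Exchange

end PTree

theorem stmt18_general {n : ℕ} (hn : 2 ≤ n) (t : PTree n) (ω : Fin n → ℤ) (hω : ∀ u, 0 < ω u)
    (𝒩 𝒩' : Finset (Finset (Fin (n - 1))))
    (h𝒩 : IsMaxNesting t 𝒩) (h𝒩' : IsMaxNesting t 𝒩')
    (N N' : Finset (Fin (n - 1)))
    (hNn : N ∉ 𝒩') (hN'n : N' ∉ 𝒩)
    (hdiff : 𝒩' = insert N' (𝒩.erase N))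
    (j j' : Fin (n - 1))
    (hj : minNest 𝒩 j = N) (hj' : minNest 𝒩' j' = N')
    (hjj' : j < j') :
    (∃ x : ℝ, 0 < x ∧ ∀ i, MPoint t 𝒩' ω i - MPoint t 𝒩 ω i =
        if i = j then x else if i = j' then -x else 0) ∧
    (∀ v : Vec (n - 1), (∀ a b : Fin (n - 1), a < b → v b < v a) →
      0 < dot v (MPoint t 𝒩' ω - MPoint t 𝒩 ω)) := by
  have hsub : 𝒩.erase N ⊆ 𝒩' := hdiff ▸ Finset.subset_insert _ _
  have hsub' : 𝒩'.erase N' ⊆ 𝒩 := by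
    rw [hdiff, Finset.erase_insert fun h => hN'n (Finset.mem_of_mem_erase h)]
    exact Finset.erase_subset _ _
  have hgrow : MPoint t 𝒩 ω j < MPoint t 𝒩' ω j := PTree.MPoint_lt_of_minNest_ssubset hω h𝒩.1
    (PTree.minNest_ssubset_of_exchange hn h𝒩' hNn hsub' hj hj' hjj'.ne)
  have hfix : ∀ i, i ≠ j → i ≠ j' → MPoint t 𝒩' ω i - MPoint t 𝒩 ω i = 0 := by
    intro i hij hij'
    have hmin := PTree.minNest_eq_of_exchange h𝒩.1 h𝒩'.1 hsub hsub'
      (hj ▸ (h𝒩.minNest_injective hn).ne hij) (hj' ▸ (h𝒩'.minNest_injective hn).ne hij')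
    simp only [MPoint, PTree.alphaN_eq_alphaIn, PTree.betaN_eq_betaIn, hmin, sub_self]
  have hsum : ∑ i, (MPoint t 𝒩' ω i - MPoint t 𝒩 ω i) = 0 := by
    rw [Finset.sum_sub_distrib, h𝒩'.sum_MPoint_eq hn h𝒩 ω, sub_self]
  have hform := eq_ite_of_sum_eq_zero hjj'.ne hfix hsum
  refine ⟨⟨_, sub_pos.2 hgrow, hform⟩, fun v hv => ?_⟩
  rw [show MPoint t 𝒩' ω - MPoint t 𝒩 ω = _ from funext hform, dot_ite_ite v hjj'.ne]
  exact mul_pos (sub_pos.2 hgrow) (sub_pos.2 (hv j j' hjj'))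

/-- Let `𝒩 ≺ 𝒩'` be a covering relation of the poset of maximal nestings
`(MN(t), <)`: `𝒩` and `𝒩'` are maximal nestings differing in exactly one nest
(`𝒩' = (𝒩 \ {N}) ∪ {N'}`), and the unique edges `j, j'` with `min𝒩(j) = N` and
`min𝒩'(j') = N'` satisfy `j < j'`. Then the edge vector from `M(t,𝒩,ω)` to `M(t,𝒩',ω)` has
the form `(0,…,0, x, 0,…,0, -x, 0,…,0)` with `x > 0` in position `j` and `-x` in position
`j'`. Consequently any vector `v` with strictly decreasing coordinates satisfies
`⟨M(t,𝒩',ω) - M(t,𝒩,ω), v⟩ > 0`, i.e. `v` induces the poset of maximal nestings on the set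
of vertices of `P_{(t,ω)}`. -/
theorem stmt18 {n : ℕ} (hn : 2 ≤ n) (t : PTree n) (ω : Fin n → ℤ) (hω : ∀ u, 0 < ω u)
    (𝒩 𝒩' : Finset (Finset (Fin (n - 1))))
    (h𝒩 : IsMaxNesting t 𝒩) (h𝒩' : IsMaxNesting t 𝒩')
    (N N' : Finset (Fin (n - 1)))
    (hN : N ∈ 𝒩) (hN' : N' ∈ 𝒩') (hNn : N ∉ 𝒩') (hN'n : N' ∉ 𝒩)
    (hdiff : 𝒩' = insert N' (𝒩.erase N))
    (j j' : Fin (n - 1))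
    (hj : minNest 𝒩 j = N) (hj' : minNest 𝒩' j' = N')
    (hjj' : j < j') :
    (∃ x : ℝ, 0 < x ∧ ∀ i, MPoint t 𝒩' ω i - MPoint t 𝒩 ω i =
        if i = j then x else if i = j' then -x else 0) ∧
    (∀ v : Vec (n - 1), (∀ a b : Fin (n - 1), a < b → v b < v a) →
      0 < dot v (MPoint t 𝒩' ω - MPoint t 𝒩 ω)) :=
  stmt18_general hn t ω hω 𝒩 𝒩' h𝒩 h𝒩' N N' hNn hN'n hdiff j j' hj hj' hjj'

end
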